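/- At every point (z,σ) ∈ ℝ^N ∖ {(0,0)} one has the anisotropic eikonal identity Φ(∇_z ρ(z,σ))² + (Φ⁰(z)^{2α}/4) Ψ(∇_σ ρ(z,σ))² = (Φ⁰(z)/ρ(z,σ))^{2α}. -/

import Mathlib

open Real MeasureTheory
open scoped RealInnerProductSpace

noncomputable section

abbrev Euc (n : ℕ) := EuclideanSpace ℝ (Fin n)

/-- A Minkowski norm on `ℝⁿ`: nonnegative, absolutely homogeneous, with `N²` of class `C²`
away from the origin and strictly convex. -/
def IsMinkowskiNorm {n : ℕ} (N : Euc n → ℝ) : Prop :=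
  (∀ x, 0 ≤ N x) ∧ (∀ (l : ℝ) (x : Euc n), N (l • x) = |l| * N x) ∧
  ContDiffOn ℝ 2 (fun x => (N x) ^ 2) {(0 : Euc n)}ᶜ ∧
  StrictConvexOn ℝ Set.univ (fun x => (N x) ^ 2)

/-- The Legendre transform (dual norm) `N⁰(x) = sup { ⟨x,ξ⟩ : N(ξ) = 1 }`. -/
def dualNorm {n : ℕ} (N : Euc n → ℝ) (x : Euc n) : ℝ :=
  sSup ((fun ξ => ⟪x, ξ⟫) '' {ξ | N ξ = 1})

variable {m k : ℕ}

/-- The dual anisotropic Minkowski gauge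
`ρ(z,σ) = (Φ⁰(z)^{2(α+1)} + 4(α+1)²Ψ⁰(σ)²)^{1/(2(α+1))}`. -/
def rho (α : ℝ) (Φ : Euc m → ℝ) (Ψ : Euc k → ℝ) (x : Euc m × Euc k) : ℝ :=
  (dualNorm Φ x.1 ^ (2 * (α + 1)) + 4 * (α + 1) ^ 2 * dualNorm Ψ x.2 ^ 2) ^ (1 / (2 * (α + 1)))

/-- Gradient in the `z` variables. -/
def gradZ (u : Euc m × Euc k → ℝ) (x : Euc m × Euc k) : Euc m :=
  gradient (fun z => u (z, x.2)) x.1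

/-- Gradient in the `σ` variables. -/
def gradS (u : Euc m × Euc k → ℝ) (x : Euc m × Euc k) : Euc k :=
  gradient (fun σ => u (x.1, σ)) x.2

/-- Divergence in the `z` variables. -/
def divZ (V : Euc m × Euc k → Euc m) (x : Euc m × Euc k) : ℝ :=
  ∑ i, fderiv ℝ (fun z => V (z, x.2) i) x.1 (EuclideanSpace.single i 1)

/-- Divergence in the `σ` variables. -/
def divS (V : Euc m × Euc k → Euc k) (x : Euc m × Euc k) : ℝ :=
  ∑ i, fderiv ℝ (fun σ => V (x.1, σ) i) x.2 (EuclideanSpace.single i 1)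

/-- The Finsler Laplacian in the `z` variables, `Δ_Φ(u) = div_z(Φ(∇_z u) ∇Φ(∇_z u))`. -/
def finslerLapZ (Φ : Euc m → ℝ) (u : Euc m × Euc k → ℝ) (x : Euc m × Euc k) : ℝ :=
  divZ (fun y => Φ (gradZ u y) • gradient Φ (gradZ u y)) x

/-- The Finsler Laplacian in the `σ` variables, `Δ_Ψ(u) = div_σ(Ψ(∇_σ u) ∇Ψ(∇_σ u))`. -/
def finslerLapS (Ψ : Euc k → ℝ) (u : Euc m × Euc k → ℝ) (x : Euc m × Euc k) : ℝ :=
  divS (fun y => Ψ (gradS u y) • gradient Ψ (gradS u y)) x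

/-- The operator `𝓛_{α,p}`. -/
def Lop (α p : ℝ) (Φ : Euc m → ℝ) (Ψ : Euc k → ℝ) (u : Euc m × Euc k → ℝ)
    (x : Euc m × Euc k) : ℝ :=
  divZ (fun y =>
      (Φ (gradZ u y) ^ 2 + dualNorm Φ y.1 ^ (2 * α) / 4 * Ψ (gradS u y) ^ 2) ^ ((p - 2) / 2) •
        (Φ (gradZ u y) • gradient Φ (gradZ u y))) x
  + divS (fun y =>
      (Φ (gradZ u y) ^ 2 + dualNorm Φ y.1 ^ (2 * α) / 4 * Ψ (gradS u y) ^ 2) ^ ((p - 2) / 2) •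
        ((dualNorm Φ y.1 ^ (2 * α) / 4 * Ψ (gradS u y)) • gradient Ψ (gradS u y))) x

/-- The operator `𝓛_{α,2}(u) = Δ_Φ(u) + (Φ⁰(z)^{2α}/4) Δ_Ψ(u)`. -/
def Lop2 (α : ℝ) (Φ : Euc m → ℝ) (Ψ : Euc k → ℝ) (u : Euc m × Euc k → ℝ)
    (x : Euc m × Euc k) : ℝ :=
  finslerLapZ Φ u x + dualNorm Φ x.1 ^ (2 * α) / 4 * finslerLapS Ψ u x

/-!
The dual norm `Φ⁰` is the support function of the compact set `{Φ = 1}`. For `z ≠ 0`, strict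
convexity of `Φ²` makes the maximizer `ξ` of `⟪z, ·⟫` on that set unique; by compactness the
maximizers at nearby points converge to `ξ`, which squeezes `Φ⁰` against its linearization and
gives `∇Φ⁰(z) = ξ`, hence `Φ(∇Φ⁰(z)) = 1` (Danskin). At `z = 0` every power `(Φ⁰)^p` with
`p > 1` has zero gradient, since `Φ⁰(z) = O(‖z‖)`. In both cases `Φ(∇(Φ⁰)^p) = p (Φ⁰)^(p-1)`,
and likewise for `Ψ`. The chain rule then reduces the eikonal identity to an algebraic identity
in `a = Φ⁰(z)`, `b = Ψ⁰(σ)` and `ρ^(2(α+1)) = a^(2(α+1)) + 4(α+1)²b²`.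
-/
open Set Filter Topology Asymptotics

section SupportFunction

variable {E : Type*} [NormedAddCommGroup E] [InnerProductSpace ℝ E]

def supportFunction (S : Set E) (x : E) : ℝ :=
  sSup ((fun ξ => ⟪x, ξ⟫) '' S)

variable {S : Set E}

theorem supportFunction_zero (S : Set E) : supportFunction S 0 = 0 := by
  have h : ∀ r ∈ (fun ξ => ⟪(0 : E), ξ⟫) '' S, r = 0 := by
    rintro _ ⟨ξ, -, rfl⟩
    exact inner_zero_left ξ
  exact le_antisymm (Real.sSup_nonpos fun r hr => (h r hr).le)
    (Real.sSup_nonneg fun r hr => (h r hr).ge)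

theorem IsCompact.inner_le_supportFunction (hS : IsCompact S) {ξ : E} (hξ : ξ ∈ S) (x : E) :
    ⟪x, ξ⟫ ≤ supportFunction S x :=
  le_csSup (hS.bddAbove_image (by fun_prop)) (mem_image_of_mem _ hξ)

theorem IsCompact.exists_inner_eq_supportFunction (hS : IsCompact S) (hne : S.Nonempty)
    (x : E) : ∃ ξ ∈ S, ⟪x, ξ⟫ = supportFunction S x :=
  (hS.image_of_continuousOn (by fun_prop)).sSup_mem (hne.image _)

theorem IsCompact.continuous_supportFunction (hS : IsCompact S) :
    Continuous (supportFunction S) :=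
  hS.continuous_sSup (f := fun x ξ => ⟪x, ξ⟫) continuous_inner

theorem Bornology.IsBounded.exists_supportFunction_le_mul_norm (hS : Bornology.IsBounded S) :
    ∃ R, ∀ x, supportFunction S x ≤ R * ‖x‖ := by
  obtain ⟨R, hR, hSR⟩ := hS.subset_closedBall_lt 0 0
  refine ⟨R, fun x => Real.sSup_le ?_ (by positivity)⟩
  rintro _ ⟨ξ, hξ, rfl⟩
  calc ⟪x, ξ⟫ ≤ ‖x‖ * ‖ξ‖ := real_inner_le_norm x ξ
    _ ≤ ‖x‖ * R := by gcongr; simpa using hSR hξ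
    _ = R * ‖x‖ := mul_comm _ _

variable [CompleteSpace E]

theorem IsCompact.hasGradientAt_supportFunction (hS : IsCompact S) {x ξ₀ : E} (hξ₀ : ξ₀ ∈ S)
    (hmax : ⟪x, ξ₀⟫ = supportFunction S x)
    (huniq : ∀ ξ ∈ S, ⟪x, ξ⟫ = supportFunction S x → ξ = ξ₀) :
    HasGradientAt (supportFunction S) ξ₀ x := by
  choose ξ hξS hξmax using hS.exists_inner_eq_supportFunction ⟨ξ₀, hξ₀⟩
  have hlim : Tendsto ξ (𝓝 x) (𝓝 ξ₀) := by
    refine hS.tendsto_nhds_of_unique_mapClusterPt (.of_forall hξS) fun η hη hcl => huniq η hη ?_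
    have hgraph : IsClosed {p : E × E | ⟪p.1, p.2⟫ = supportFunction S p.1} :=
      isClosed_eq (by fun_prop) (hS.continuous_supportFunction.comp continuous_fst)
    have hcl' : MapClusterPt (x, η) (𝓝 x) fun y => (y, ξ y) := by
      rw [((𝓝 x).basis_sets.prod_nhds (𝓝 η).basis_sets).mapClusterPt_iff_frequently]
      rintro ⟨s, t⟩ ⟨hs, ht⟩
      exact ((hcl.frequently ht).and_eventually hs).mono fun y hy => ⟨hy.2, hy.1⟩
    exact hgraph.mem_of_mapClusterPt hcl' (.of_forall hξmax)
  have hsandwich : ∀ y, ‖supportFunction S y - supportFunction S x - ⟪ξ₀, y - x⟫‖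
      ≤ ‖ξ y - ξ₀‖ * ‖y - x‖ := by
    intro y
    have hlow := hS.inner_le_supportFunction hξ₀ y
    have hup := hS.inner_le_supportFunction (hξS y) x
    have hcs := real_inner_le_norm (ξ y - ξ₀) (y - x)
    rw [← hξmax y] at hlow ⊢
    rw [← hmax] at hup ⊢
    simp only [inner_sub_left, inner_sub_right, real_inner_comm ξ₀, real_inner_comm (ξ y)]
      at hlow hup hcs ⊢
    rw [Real.norm_eq_abs, abs_le]
    constructor <;> linarith [mul_nonneg (norm_nonneg (ξ y - ξ₀)) (norm_nonneg (y - x))]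
  rw [hasGradientAt_iff_isLittleO, isLittleO_iff]
  intro c hc
  filter_upwards [hlim (Metric.closedBall_mem_nhds ξ₀ hc)] with y hy
  calc _ ≤ ‖ξ y - ξ₀‖ * ‖y - x‖ := hsandwich y
    _ ≤ c * ‖y - x‖ := by gcongr; rwa [mem_preimage, mem_closedBall_iff_norm] at hy

end SupportFunction

section Gradient

variable {E : Type*} [NormedAddCommGroup E] [InnerProductSpace ℝ E] [CompleteSpace E]

theorem HasDerivAt.comp_hasGradientAt {f : E → ℝ} {φ : ℝ → ℝ} {x η : E} {φ' : ℝ}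
    (hφ : HasDerivAt φ φ' (f x)) (hf : HasGradientAt f η x) :
    HasGradientAt (fun y => φ (f y)) (φ' • η) x := by
  rw [hasGradientAt_iff_hasFDerivAt, map_smul]
  exact hφ.comp_hasFDerivAt x hf

theorem hasGradientAt_rpow_zero_of_le_mul_norm {f : E → ℝ} {R p : ℝ} (hp : 1 < p)
    (hf₀ : ∀ z, 0 ≤ f z) (hfR : ∀ z, f z ≤ R * ‖z‖) :
    HasGradientAt (fun z => f z ^ p) 0 0 := by
  have hf0 : f 0 = 0 := le_antisymm (by simpa using hfR 0) (hf₀ 0)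
  have hbig : f =O[𝓝 0] fun z => ‖z‖ :=
    .of_bound R (.of_forall fun z => by simpa [abs_of_nonneg (hf₀ z)] using hfR z)
  have htend : Tendsto (fun z => f z ^ (p - 1)) (𝓝 0) (𝓝 0) := by
    have hf : Tendsto f (𝓝 0) (𝓝 0) :=
      hbig.trans_tendsto (by simpa using (continuous_norm (E := E)).tendsto 0)
    have := hf.rpow_const (p := p - 1) (Or.inr (by linarith))
    rwa [Real.zero_rpow (by linarith)] at this
  have hsplit : (fun z => f z ^ p) = fun z => f z ^ (p - 1) * f z := funext fun z => by
    rw [← Real.rpow_add_one' (hf₀ z) (by linarith), sub_add_cancel]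
  rw [hasGradientAt_iff_isLittleO]
  simp only [hf0, Real.zero_rpow (by linarith : p ≠ 0), inner_zero_left, sub_zero]
  rw [hsplit, ← isLittleO_norm_right]
  simpa using ((isLittleO_one_iff ℝ).2 htend).mul_isBigO hbig

end Gradient

theorem dualNorm_zero {n : ℕ} (N : Euc n → ℝ) : dualNorm N 0 = 0 :=
  supportFunction_zero _

namespace IsMinkowskiNorm

variable {n : ℕ} {N : Euc n → ℝ}

theorem nonneg (hN : IsMinkowskiNorm N) (x : Euc n) : 0 ≤ N x := hN.1 x

theorem map_smul (hN : IsMinkowskiNorm N) (l : ℝ) (x : Euc n) : N (l • x) = |l| * N x :=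
  hN.2.1 l x

theorem strictConvexOn_sq (hN : IsMinkowskiNorm N) :
    StrictConvexOn ℝ univ fun x => N x ^ 2 :=
  hN.2.2.2

theorem map_zero (hN : IsMinkowskiNorm N) : N 0 = 0 := by
  simpa using hN.map_smul 0 0

theorem pos (hN : IsMinkowskiNorm N) {x : Euc n} (hx : x ≠ 0) : 0 < N x := by
  refine (hN.nonneg x).lt_of_ne' fun h0 => ?_
  have hne : (0 : Euc n) ≠ (2 : ℝ) • x := by simpa [eq_comm] using hx
  have hmid : (1 / 2 : ℝ) • (0 : Euc n) + (1 / 2 : ℝ) • ((2 : ℝ) • x) = x := by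
    rw [smul_zero, zero_add, smul_smul]; norm_num
  have := hN.strictConvexOn_sq.2 (mem_univ _) (mem_univ _) hne one_half_pos one_half_pos
    (add_halves 1)
  simp only [hmid, hN.map_smul, hN.map_zero, h0, smul_eq_mul] at this
  norm_num at this

theorem continuous (hN : IsMinkowskiNorm N) : Continuous N := by
  have hsq : Continuous fun x => N x ^ 2 :=
    hN.strictConvexOn_sq.convexOn.locallyLipschitz.continuous
  simpa only [Real.sqrt_sq (hN.nonneg _)] using hsq.sqrt

theorem exists_pos_mul_norm_le (hN : IsMinkowskiNorm N) : ∃ c > 0, ∀ x, c * ‖x‖ ≤ N x := by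
  obtain ⟨c, hc, hcN⟩ := (isCompact_sphere (0 : Euc n) 1).exists_forall_le'
    hN.continuous.continuousOn fun x hx => hN.pos (Metric.ne_of_mem_sphere hx one_ne_zero)
  refine ⟨c, hc, fun x => ?_⟩
  rcases eq_or_ne x 0 with rfl | hx
  · simp [hN.map_zero]
  · have hx' : 0 < ‖x‖ := norm_pos_iff.2 hx
    have := hcN (‖x‖⁻¹ • x) (by simp [norm_smul, hx])
    rwa [hN.map_smul, abs_of_pos (inv_pos.2 hx'), le_inv_mul_iff₀ hx', mul_comm] at this

theorem isCompact_setOf_eq_one (hN : IsMinkowskiNorm N) : IsCompact {ξ | N ξ = 1} := by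
  obtain ⟨c, hc, hcN⟩ := hN.exists_pos_mul_norm_le
  refine Metric.isCompact_of_isClosed_isBounded (isClosed_eq hN.continuous continuous_const)
    ((Metric.isBounded_closedBall (x := 0) (r := 1 / c)).subset fun ξ (hξ : N ξ = 1) => ?_)
  rw [mem_closedBall_zero_iff, le_div_iff₀' hc, ← hξ]
  exact hcN ξ

theorem map_inv_smul_self (hN : IsMinkowskiNorm N) {x : Euc n} (hx : x ≠ 0) :
    N ((N x)⁻¹ • x) = 1 := by
  rw [hN.map_smul, abs_of_pos (inv_pos.2 (hN.pos hx)), inv_mul_cancel₀ (hN.pos hx).ne']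

theorem inner_le_dualNorm_mul (hN : IsMinkowskiNorm N) (x v : Euc n) :
    ⟪x, v⟫ ≤ dualNorm N x * N v := by
  rcases eq_or_ne v 0 with rfl | hv
  · simp [hN.map_zero]
  · have := hN.isCompact_setOf_eq_one.inner_le_supportFunction (hN.map_inv_smul_self hv) x
    rwa [real_inner_smul_right, inv_mul_le_iff₀ (hN.pos hv), mul_comm] at this

theorem dualNorm_pos (hN : IsMinkowskiNorm N) {x : Euc n} (hx : x ≠ 0) :
    0 < dualNorm N x := by
  have h := hN.inner_le_dualNorm_mul x x
  rw [real_inner_self_eq_norm_sq] at h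
  exact pos_of_mul_pos_left (lt_of_lt_of_le (by positivity) h) (hN.nonneg x)

theorem dualNorm_nonneg (hN : IsMinkowskiNorm N) (x : Euc n) : 0 ≤ dualNorm N x := by
  rcases eq_or_ne x 0 with rfl | hx
  · exact (dualNorm_zero N).ge
  · exact (hN.dualNorm_pos hx).le

theorem eq_of_inner_eq_dualNorm (hN : IsMinkowskiNorm N) {x ξ₁ ξ₂ : Euc n} (hx : x ≠ 0)
    (h₁ : N ξ₁ = 1) (h₂ : N ξ₂ = 1) (e₁ : ⟪x, ξ₁⟫ = dualNorm N x)
    (e₂ : ⟪x, ξ₂⟫ = dualNorm N x) : ξ₁ = ξ₂ := by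
  by_contra hne
  set μ := (1 / 2 : ℝ) • ξ₁ + (1 / 2 : ℝ) • ξ₂
  have hμ : N μ < 1 := by
    have := hN.strictConvexOn_sq.2 (mem_univ ξ₁) (mem_univ ξ₂) hne one_half_pos one_half_pos
      (add_halves 1)
    norm_num [h₁, h₂, abs_of_nonneg (hN.nonneg _)] at this
    exact this
  have hinner : ⟪x, μ⟫ = dualNorm N x := by
    simp only [μ, inner_add_right, real_inner_smul_right, e₁, e₂]; ring
  have := hN.inner_le_dualNorm_mul x μ
  rw [hinner] at this
  nlinarith [hN.dualNorm_pos hx, hN.nonneg μ]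

theorem hasGradientAt_dualNorm (hN : IsMinkowskiNorm N) {x : Euc n} (hx : x ≠ 0) :
    ∃ ξ, N ξ = 1 ∧ HasGradientAt (dualNorm N) ξ x := by
  have hS := hN.isCompact_setOf_eq_one
  obtain ⟨ξ, hξ, hmax⟩ := hS.exists_inner_eq_supportFunction ⟨_, hN.map_inv_smul_self hx⟩ x
  exact ⟨ξ, hξ, hS.hasGradientAt_supportFunction hξ hmax
    fun η hη hηmax => hN.eq_of_inner_eq_dualNorm hx hη hξ hηmax hmax⟩

theorem exists_hasGradientAt_dualNorm_rpow (hN : IsMinkowskiNorm N) {p : ℝ} (hp : 1 < p)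
    (z : Euc n) :
    ∃ η, HasGradientAt (fun y => dualNorm N y ^ p) η z ∧
      N η = p * dualNorm N z ^ (p - 1) := by
  rcases eq_or_ne z 0 with rfl | hz
  · obtain ⟨R, hR⟩ := hN.isCompact_setOf_eq_one.isBounded.exists_supportFunction_le_mul_norm
    refine ⟨0, hasGradientAt_rpow_zero_of_le_mul_norm hp hN.dualNorm_nonneg hR, ?_⟩
    rw [hN.map_zero, dualNorm_zero, Real.zero_rpow (by linarith), mul_zero]
  · obtain ⟨ξ, hξ, hgrad⟩ := hN.hasGradientAt_dualNorm hz
    have hpos := hN.dualNorm_pos hz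
    refine ⟨_, (Real.hasDerivAt_rpow_const (Or.inl hpos.ne')).comp_hasGradientAt hgrad, ?_⟩
    rw [hN.map_smul, hξ, mul_one, abs_of_nonneg]
    exact mul_nonneg (by linarith) (Real.rpow_nonneg hpos.le _)

theorem exists_hasGradientAt_dualNorm_sq (hN : IsMinkowskiNorm N) (z : Euc n) :
    ∃ η, HasGradientAt (fun y => dualNorm N y ^ 2) η z ∧ N η = 2 * dualNorm N z := by
  obtain ⟨η, hgrad, hη⟩ := hN.exists_hasGradientAt_dualNorm_rpow one_lt_two z
  refine ⟨η, by simpa only [Real.rpow_two] using hgrad, by norm_num [hη]⟩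

theorem map_gradient_comp (hN : IsMinkowskiNorm N) {f : Euc n → ℝ} {φ : ℝ → ℝ}
    {x η : Euc n} {φ' : ℝ} (hφ : HasDerivAt φ φ' (f x)) (hφ' : 0 ≤ φ') (hf : HasGradientAt f η x) :
    N (gradient (fun y => φ (f y)) x) = φ' * N η := by
  rw [(hφ.comp_hasGradientAt hf).gradient, hN.map_smul, abs_of_nonneg hφ']

end IsMinkowskiNorm

theorem eikonal_algebraic_identity {α a b : ℝ} (hα : 0 < α) (ha : 0 ≤ a)
    (hF : 0 < a ^ (2 * (α + 1)) + 4 * (α + 1) ^ 2 * b ^ 2) :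
    ((a ^ (2 * (α + 1)) + 4 * (α + 1) ^ 2 * b ^ 2) ^ (1 / (2 * (α + 1)) - 1)
        * a ^ (2 * (α + 1) - 1)) ^ 2
      + a ^ (2 * α) / 4
        * ((a ^ (2 * (α + 1)) + 4 * (α + 1) ^ 2 * b ^ 2) ^ (1 / (2 * (α + 1)) - 1)
          * (4 * (α + 1) * b)) ^ 2
    = (a / (a ^ (2 * (α + 1)) + 4 * (α + 1) ^ 2 * b ^ 2) ^ (1 / (2 * (α + 1)))) ^ (2 * α) := by
  have h2α : a ^ (2 * α) = (a ^ α) ^ 2 := by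
    rw [mul_comm]; exact_mod_cast Real.rpow_mul_natCast ha α 2
  have hpow : ∀ t, 0 ≤ t → a ^ (2 * α + t) = (a ^ α) ^ 2 * a ^ t := fun t ht => by
    rw [Real.rpow_add' ha (by linarith), h2α]
  -- in terms of `a ^ α` and `r = ρ` the identity becomes rational
  set F := a ^ (2 * (α + 1)) + 4 * (α + 1) ^ 2 * b ^ 2 with hF_def
  set r := F ^ (1 / (2 * (α + 1))) with hr_def
  have hr : 0 < r := Real.rpow_pos_of_pos hF _
  have hr2α : r ^ (2 * α) * r ^ 2 = F := by
    rw [← Real.rpow_two, ← Real.rpow_add hr, hr_def, ← Real.rpow_mul hF.le]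
    convert Real.rpow_one F using 2
    field_simp
  rw [show 2 * (α + 1) = 2 * α + 2 by ring, hpow 2 zero_le_two, Real.rpow_two] at hF_def
  rw [Real.rpow_sub_one hF.ne', ← hr_def, Real.div_rpow ha hr.le, eq_div_iff (by positivity),
    ← hr2α, show 2 * (α + 1) - 1 = 2 * α + 1 by ring, hpow 1 zero_le_one, h2α, Real.rpow_one]
  field_simp
  rw [← hF_def, ← hr2α]
  ring

theorem anisotropic_eikonal_general (m k : ℕ) (α : ℝ) (hα : 0 < α)
    (Φ : Euc m → ℝ) (Ψ : Euc k → ℝ) (hΦ : IsMinkowskiNorm Φ) (hΨ : IsMinkowskiNorm Ψ) :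
    ∀ x : Euc m × Euc k, x ≠ 0 →
      Φ (gradZ (rho α Φ Ψ) x) ^ 2 +
        dualNorm Φ x.1 ^ (2 * α) / 4 * Ψ (gradS (rho α Φ Ψ) x) ^ 2
      = (dualNorm Φ x.1 / rho α Φ Ψ x) ^ (2 * α) := by
  intro x hx
  obtain ⟨ηz, hηz, hΦηz⟩ :=
    hΦ.exists_hasGradientAt_dualNorm_rpow (p := 2 * (α + 1)) (by linarith) x.1
  obtain ⟨ησ, hησ, hΨησ⟩ := hΨ.exists_hasGradientAt_dualNorm_sq x.2
  have hF : 0 < dualNorm Φ x.1 ^ (2 * (α + 1)) + 4 * (α + 1) ^ 2 * dualNorm Ψ x.2 ^ 2 := by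
    rcases eq_or_ne x.1 0 with h1 | h1
    · have := hΨ.dualNorm_pos fun h2 => hx (Prod.ext h1 h2)
      have := Real.rpow_nonneg (hΦ.dualNorm_nonneg x.1) (2 * (α + 1))
      positivity
    · have := Real.rpow_pos_of_pos (hΦ.dualNorm_pos h1) (2 * (α + 1))
      positivity
  have hz : Φ (gradZ (rho α Φ Ψ) x) = _ :=
    hΦ.map_gradient_comp
      (φ := fun t => (t + 4 * (α + 1) ^ 2 * dualNorm Ψ x.2 ^ 2) ^ (1 / (2 * (α + 1))))
      (((hasDerivAt_id' _).add_const _).rpow_const (Or.inl hF.ne')) (by positivity) hηz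
  have hσ : Ψ (gradS (rho α Φ Ψ) x) = _ :=
    hΨ.map_gradient_comp
      (φ := fun t => (dualNorm Φ x.1 ^ (2 * (α + 1)) + 4 * (α + 1) ^ 2 * t) ^ (1 / (2 * (α + 1))))
      ((((hasDerivAt_id' _).const_mul _).const_add _).rpow_const (Or.inl hF.ne')) (by positivity)
      hησ
  rw [hz, hσ, hΦηz, hΨησ, rho]
  convert eikonal_algebraic_identity hα (hΦ.dualNorm_nonneg x.1) hF using 3 <;> field_simp

/-- Anisotropic eikonal equation: `Φ(∇_z ρ)² + (Φ⁰(z)^{2α}/4) Ψ(∇_σ ρ)² = (Φ⁰(z)/ρ)^{2α}`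
on `ℝ^N ∖ {0}`. -/
theorem anisotropic_eikonal (m k : ℕ) (hm : 1 ≤ m) (hk : 1 ≤ k) (α : ℝ) (hα : 0 < α)
    (Φ : Euc m → ℝ) (Ψ : Euc k → ℝ) (hΦ : IsMinkowskiNorm Φ) (hΨ : IsMinkowskiNorm Ψ) :
    ∀ x : Euc m × Euc k, x ≠ 0 →
      Φ (gradZ (rho α Φ Ψ) x) ^ 2 +
        dualNorm Φ x.1 ^ (2 * α) / 4 * Ψ (gradS (rho α Φ Ψ) x) ^ 2
      = (dualNorm Φ x.1 / rho α Φ Ψ x) ^ (2 * α) :=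
  anisotropic_eikonal_general m k α hα Φ Ψ hΦ hΨ
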